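/- arXiv:1009.5580 — 2 statements merged into one kernel-verified Lean document; each statement's English description precedes it below -/
import Mathlib

section
/- Let E be a real Banach space, let 0 < λ ≤ 1, and let u : E → C_λ[0,1] be a bounded linear operator into the Hölder space C_λ[0,1]. Then for every k ∈ ℕ, e_k(u : E → C[0,1]) ≤ 2 · ‖u : E → C_λ[0,1]‖^{1/(2λ+1)} · e_k(u : E → L₂[0,1])^{2λ/(2λ+1)}, where the entropy numbers on the left and right are those of the same operator u regarded as mapping into C[0,1] (sup norm) and into L₂[0,1], respectively. -/
/-!
If `g ∈ C[0,1]` is bounded by `K` with `l`-Hölder constant `K` and `|g t₀| = a`, then `|g| ≥ a / 2`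
on an interval of length `δ = (a / 2K)^(1/l)` inside `[0,1]`, so `‖g‖₂² ≥ (a / 2)² δ`; this
rearranges to `‖g‖_∞ ≤ 2 K^(1/(2l+1)) ‖g‖₂^(2l/(2l+1))`. Applied to `u (x - y)`, it shows that the
points of `u(B_E)` whose images lie in a common `L₂`-ball of radius `ε` are at sup-distance at most
`2r`, with `r = 2 M^(1/(2l+1)) ε^(2l/(2l+1))`. Such a piece is equicontinuous, so the midpoint of
its upper and lower envelopes is continuous and lies within `r` of each of its members: every
`L₂`-cover of radius `ε` yields a `C[0,1]`-cover of radius `r` by as many balls.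
-/

open MeasureTheory Filter Set

/-- The `n`-th entropy number of a bounded operator `u : E → F`:
`e_n(u) = inf { ε > 0 : u(B_E) can be covered by 2^{n-1} closed balls of radius ε }`. -/
noncomputable def entropyNumber {E F : Type*} [NormedAddCommGroup E] [NormedSpace ℝ E]
    [NormedAddCommGroup F] [NormedSpace ℝ F] (u : E →L[ℝ] F) (n : ℕ) : ℝ :=
  sInf {ε : ℝ | 0 < ε ∧ ∃ f : Fin (2 ^ (n - 1)) → F,
    u '' Metric.closedBall 0 1 ⊆ ⋃ k, Metric.closedBall (f k) ε}

/-- The canonical embedding `C[0,1] → L₂[0,1]`. -/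
noncomputable def toL2 : C(Set.Icc (0 : ℝ) 1, ℝ) →L[ℝ]
    Lp ℝ 2 (volume : Measure (Set.Icc (0 : ℝ) 1)) :=
  ContinuousMap.toLp 2 volume ℝ

theorem Equicontinuous.continuous_ciSup {ι X : Type*} [TopologicalSpace X] [Nonempty ι]
    {F : ι → X → ℝ} (hF : Equicontinuous F) (hbdd : ∀ x, BddAbove (range fun i => F i x)) :
    Continuous fun x => ⨆ i, F i x := by
  refine continuous_iff_continuousAt.2 fun x => Metric.continuousAt_iff'.2 fun ε hε => ?_
  filter_upwards [Metric.equicontinuousAt_iff_right.1 (hF x) (ε / 2) (half_pos hε)] with y hy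
  have hxy : ∀ i, |F i x - F i y| < ε / 2 := fun i => by simpa only [Real.dist_eq] using hy i
  have hle : ∀ a b : X, (∀ i, F i a ≤ F i b + ε / 2) →
      ⨆ i, F i a ≤ (⨆ i, F i b) + ε / 2 := fun a b h =>
    ciSup_le fun i => (h i).trans (add_le_add_left (le_ciSup (hbdd b) i) _)
  rw [Real.dist_eq, abs_sub_lt_iff]
  constructor
  · linarith [hle y x fun i => by linarith [abs_lt.1 (hxy i)]]
  · linarith [hle x y fun i => by linarith [abs_lt.1 (hxy i)]]

theorem Equicontinuous.neg {ι X : Type*} [TopologicalSpace X] {F : ι → X → ℝ}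
    (hF : Equicontinuous F) : Equicontinuous fun i => -F i := by
  intro x
  rw [Metric.equicontinuousAt_iff_right]
  simpa only [Pi.neg_apply, dist_neg_neg] using Metric.equicontinuousAt_iff_right.1 (hF x)

theorem ContinuousMap.exists_forall_dist_le_of_equicontinuous {X : Type*} [TopologicalSpace X]
    [CompactSpace X] {A : Set C(X, ℝ)} (hne : A.Nonempty)
    (hA : Equicontinuous fun φ : A => ⇑(φ : C(X, ℝ))) {r : ℝ}
    (hdist : ∀ φ ∈ A, ∀ ψ ∈ A, dist φ ψ ≤ 2 * r) :
    ∃ f : C(X, ℝ), ∀ φ ∈ A, dist φ f ≤ r := by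
  have : Nonempty A := hne.to_subtype
  have hr : 0 ≤ r := by
    obtain ⟨φ, hφ⟩ := hne; linarith [hdist φ hφ φ hφ, dist_self φ]
  have hpt : ∀ φ ∈ A, ∀ ψ ∈ A, ∀ t, φ t ≤ ψ t + 2 * r := fun φ hφ ψ hψ t => by
    have := (ContinuousMap.dist_apply_le_dist t).trans (hdist φ hφ ψ hψ)
    rw [Real.dist_eq, abs_le] at this
    linarith
  obtain ⟨φ₀, hφ₀⟩ := hne
  have hbdd : ∀ t, BddAbove (range fun φ : A => (φ : C(X, ℝ)) t) := fun t =>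
    ⟨φ₀ t + 2 * r, by rintro _ ⟨ψ, rfl⟩; exact hpt ψ ψ.2 φ₀ hφ₀ t⟩
  have hbdd' : ∀ t, BddAbove (range fun φ : A => -(φ : C(X, ℝ)) t) := fun t =>
    ⟨-φ₀ t + 2 * r, by rintro _ ⟨ψ, rfl⟩; linarith [hpt φ₀ hφ₀ ψ ψ.2 t]⟩
  let P : C(X, ℝ) := ⟨fun t => ⨆ φ : A, (φ : C(X, ℝ)) t, hA.continuous_ciSup hbdd⟩
  let P' : C(X, ℝ) := ⟨fun t => ⨆ φ : A, -(φ : C(X, ℝ)) t, hA.neg.continuous_ciSup hbdd'⟩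
  -- `-P'` is the lower envelope of `A`, so this is the midpoint of the two envelopes
  refine ⟨(1 / 2 : ℝ) • (P - P'), fun φ hφ => (ContinuousMap.dist_le hr).2 fun t => ?_⟩
  have h₁ : φ t ≤ P t := le_ciSup (hbdd t) ⟨φ, hφ⟩
  have h₂ : P t ≤ φ t + 2 * r := ciSup_le fun ψ => hpt ψ ψ.2 φ hφ t
  have h₃ : -φ t ≤ P' t := le_ciSup (hbdd' t) ⟨φ, hφ⟩
  have h₄ : P' t ≤ -φ t + 2 * r := ciSup_le fun ψ => by linarith [hpt φ hφ ψ ψ.2 t]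
  simp only [ContinuousMap.smul_apply, ContinuousMap.sub_apply, smul_eq_mul, Real.dist_eq,
    abs_le]
  constructor <;> linarith

theorem ContinuousMap.exists_cover_of_cover_image {X G ι : Type*} [TopologicalSpace X]
    [CompactSpace X] [PseudoMetricSpace G] {S : Set C(X, ℝ)}
    (hS : Equicontinuous fun φ : S => ⇑(φ : C(X, ℝ))) (T : C(X, ℝ) → G) {ε r : ℝ}
    (hT : ∀ φ ∈ S, ∀ ψ ∈ S, dist (T φ) (T ψ) ≤ 2 * ε → dist φ ψ ≤ 2 * r)
    (g : ι → G) (hg : T '' S ⊆ ⋃ i, Metric.closedBall (g i) ε) :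
    ∃ f : ι → C(X, ℝ), S ⊆ ⋃ i, Metric.closedBall (f i) r := by
  classical
  let A : ι → Set C(X, ℝ) := fun i => S ∩ T ⁻¹' Metric.closedBall (g i) ε
  have hcenter : ∀ i, (A i).Nonempty → ∃ f : C(X, ℝ), ∀ φ ∈ A i, dist φ f ≤ r := fun i hi =>
    exists_forall_dist_le_of_equicontinuous hi (hS.comp (Set.inclusion inter_subset_left))
      fun φ hφ ψ hψ => hT φ hφ.1 ψ hψ.1 <|
        (dist_triangle_right _ _ (g i)).trans
          (by linarith [Metric.mem_closedBall.1 hφ.2, Metric.mem_closedBall.1 hψ.2])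
  choose f hf using hcenter
  refine ⟨fun i => if hi : (A i).Nonempty then f i hi else 0, fun φ hφ => ?_⟩
  obtain ⟨i, hi⟩ := mem_iUnion.1 (hg (mem_image_of_mem T hφ))
  have hφA : φ ∈ A i := ⟨hφ, hi⟩
  refine mem_iUnion.2 ⟨i, Metric.mem_closedBall.2 ?_⟩
  dsimp only
  rw [dif_pos ⟨φ, hφA⟩]
  exact hf i _ φ hφA

section EntropyNumber

variable {E F G : Type*} [NormedAddCommGroup E] [NormedSpace ℝ E] [NormedAddCommGroup F]
  [NormedSpace ℝ F] [NormedAddCommGroup G] [NormedSpace ℝ G]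

theorem entropyNumber_nonneg (u : E →L[ℝ] F) (n : ℕ) : 0 ≤ entropyNumber u n :=
  Real.sInf_nonneg fun _ hε => hε.1.le

theorem entropyNumber_le {u : E →L[ℝ] F} {n : ℕ} {ε : ℝ} (hε : 0 < ε) (f : Fin (2 ^ (n - 1)) → F)
    (hf : u '' Metric.closedBall 0 1 ⊆ ⋃ j, Metric.closedBall (f j) ε) :
    entropyNumber u n ≤ ε :=
  csInf_le ⟨0, fun _ h => h.1.le⟩ ⟨hε, f, hf⟩

theorem entropyNumber_le_of_covers {u : E →L[ℝ] F} {v : E →L[ℝ] G} {n : ℕ} {φ : ℝ → ℝ}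
    (hφ : ContinuousAt φ (entropyNumber v n)) (hφ₀ : 0 ≤ φ (entropyNumber v n))
    (h : ∀ ε > 0, ∀ g : Fin (2 ^ (n - 1)) → G,
      v '' Metric.closedBall 0 1 ⊆ ⋃ j, Metric.closedBall (g j) ε →
      ∃ f : Fin (2 ^ (n - 1)) → F,
        u '' Metric.closedBall 0 1 ⊆ ⋃ j, Metric.closedBall (f j) (φ ε)) :
    entropyNumber u n ≤ φ (entropyNumber v n) := by
  have hne : {ε : ℝ | 0 < ε ∧ ∃ g : Fin (2 ^ (n - 1)) → G,
      v '' Metric.closedBall 0 1 ⊆ ⋃ j, Metric.closedBall (g j) ε}.Nonempty := by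
    refine ⟨‖v‖ + 1, by positivity, fun _ => 0, ?_⟩
    rintro _ ⟨x, hx, rfl⟩
    refine mem_iUnion.2 ⟨⟨0, Nat.two_pow_pos _⟩, mem_closedBall_zero_iff.2 ?_⟩
    have hx : ‖x‖ ≤ 1 := mem_closedBall_zero_iff.1 hx
    nlinarith [v.le_opNorm x, norm_nonneg v]
  refine le_of_forall_gt_imp_ge_of_dense fun ρ hρ => ?_
  obtain ⟨δ, hδ, hφδ⟩ := Metric.continuousAt_iff.1 hφ (ρ - φ (entropyNumber v n)) (by linarith)
  obtain ⟨ε, ⟨hε, g, hg⟩, hεδ : ε < entropyNumber v n + δ⟩ := Real.lt_sInf_add_pos hne hδ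
  have he₂ε : entropyNumber v n ≤ ε := entropyNumber_le hε g hg
  obtain ⟨f, hf⟩ := h ε hε g hg
  have hφε : φ ε < ρ := by
    have := hφδ (show dist ε (entropyNumber v n) < δ by
      rw [Real.dist_eq, abs_lt]; constructor <;> linarith)
    rw [Real.dist_eq, abs_lt] at this
    linarith
  refine entropyNumber_le (ε := ρ) (by linarith) f (hf.trans ?_)
  exact iUnion_mono fun j => Metric.closedBall_subset_closedBall hφε.le

end EntropyNumber

/-- Implied by `‖g‖_{C_l} ≤ K`, the Hölder norm being the sum of the two quantities bounded here. -/
def HolderBounded {X : Type*} [MetricSpace X] [CompactSpace X] (l K : ℝ) (g : C(X, ℝ)) : Prop :=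
  ‖g‖ ≤ K ∧ ∀ s t, dist (g s) (g t) ≤ K * dist s t ^ l

namespace HolderBounded

variable {X : Type*} [MetricSpace X] [CompactSpace X] {l K : ℝ} {g : C(X, ℝ)}

theorem nonneg (hg : HolderBounded l K g) : 0 ≤ K := (norm_nonneg g).trans hg.1

theorem mono (hg : HolderBounded l K g) {K' : ℝ} (hK : K ≤ K') : HolderBounded l K' g :=
  ⟨hg.1.trans hK, fun s t => (hg.2 s t).trans (by gcongr)⟩

theorem equicontinuous {ι : Type*} {F : ι → C(X, ℝ)} (hl : 0 < l)
    (hF : ∀ i, HolderBounded l K (F i)) : Equicontinuous fun i => ⇑(F i) := by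
  refine Metric.equicontinuous_of_continuity_modulus (fun d => K * d ^ l) ?_ _
    fun s t i => (hF i).2 s t
  simpa [Real.zero_rpow hl.ne'] using
    ((Real.continuousAt_rpow_const 0 l (Or.inr hl.le)).const_mul K).tendsto

end HolderBounded

theorem holderBounded_of_forall_lt {l K : ℝ} {g : C(Icc (0 : ℝ) 1, ℝ)}
    (h : ∀ s t : Icc (0 : ℝ) 1, (s : ℝ) < t → |g t - g s| / ((t : ℝ) - s) ^ l + ‖g‖ ≤ K) :
    HolderBounded l K g := by
  have hnorm : ‖g‖ ≤ K := le_of_add_le_of_nonneg_right (h 0 1 zero_lt_one)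
    (div_nonneg (abs_nonneg _) (Real.rpow_nonneg (by simp) _))
  refine ⟨hnorm, fun s t => ?_⟩
  wlog hst : (s : ℝ) ≤ t generalizing s t
  · rw [dist_comm, dist_comm s]; exact this t s (le_of_not_ge hst)
  rcases hst.lt_or_eq with hst | hst
  · have hpos : 0 < ((t : ℝ) - s) ^ l := Real.rpow_pos_of_pos (sub_pos.2 hst) l
    have := (div_le_iff₀ hpos).1 (le_of_add_le_of_nonneg_left (h s t hst) (norm_nonneg g))
    rwa [Real.dist_eq, Subtype.dist_eq, Real.dist_eq, abs_sub_comm (g s),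
      abs_sub_comm (s : ℝ), abs_of_pos (sub_pos.2 hst)]
  · rw [Subtype.ext hst, dist_self, dist_self]
    exact mul_nonneg ((norm_nonneg g).trans hnorm) (Real.rpow_nonneg le_rfl l)

theorem le_rpow_mul_rpow_of_sq_mul_rpow_le {l b K L : ℝ} (hl : 0 < l) (hb : 0 < b) (hK : 0 < K)
    (hL : 0 ≤ L) (h : b ^ 2 * (b / K) ^ (1 / l) ≤ L ^ 2) :
    b ≤ K ^ (1 / (2 * l + 1)) * L ^ (2 * l / (2 * l + 1)) := by
  have hpow : b ^ ((2 * l + 1) / l) ≤ L ^ 2 * K ^ (1 / l) := by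
    calc b ^ ((2 * l + 1) / l) = b ^ 2 * (b / K) ^ (1 / l) * K ^ (1 / l) := by
          rw [Real.div_rpow hb.le hK.le,
            show (2 * l + 1) / l = (2 : ℕ) + 1 / l by push_cast; field_simp,
            Real.rpow_add hb, Real.rpow_natCast]
          field_simp
      _ ≤ L ^ 2 * K ^ (1 / l) := by gcongr
  calc b = (b ^ ((2 * l + 1) / l)) ^ (l / (2 * l + 1)) := by
        rw [← Real.rpow_mul hb.le, div_mul_div_cancel₀ hl.ne', div_self (by positivity),
          Real.rpow_one]
    _ ≤ (L ^ 2 * K ^ (1 / l)) ^ (l / (2 * l + 1)) := by gcongr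
    _ = K ^ (1 / (2 * l + 1)) * L ^ (2 * l / (2 * l + 1)) := by
        rw [Real.mul_rpow (by positivity) (by positivity), ← Real.rpow_natCast L 2,
          ← Real.rpow_mul hL, ← Real.rpow_mul hK.le, mul_comm]
        congr 2 <;> push_cast <;> field_simp

theorem volume_preimage_coe_Icc {c d : ℝ} (hc : 0 ≤ c) (hd : d ≤ 1) :
    (volume : Measure (Icc (0 : ℝ) 1)) (Subtype.val ⁻¹' Icc c d) = ENNReal.ofReal (d - c) := by
  rw [unitInterval.volume_def, comap_subtype_coe_apply measurableSet_Icc,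
    Subtype.image_preimage_coe, inter_eq_self_of_subset_right (Icc_subset_Icc hc hd),
    Real.volume_Icc]

theorem norm_toL2_sq (g : C(Icc (0 : ℝ) 1, ℝ)) : ‖toL2 g‖ ^ 2 = ∫ t, g t ^ 2 := by
  rw [← real_inner_self_eq_norm_sq, toL2, ContinuousMap.inner_toLp]
  simp [sq]

theorem sq_mul_le_norm_toL2_sq {g : C(Icc (0 : ℝ) 1, ℝ)} {b c δ : ℝ} (hb : 0 ≤ b) (hc : 0 ≤ c)
    (hδ : 0 ≤ δ) (hcδ : c + δ ≤ 1) (hg : ∀ t : Icc (0 : ℝ) 1, (t : ℝ) ∈ Icc c (c + δ) → b ≤ |g t|) :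
    b ^ 2 * δ ≤ ‖toL2 g‖ ^ 2 := by
  have hT : MeasurableSet (Subtype.val ⁻¹' Icc c (c + δ) : Set (Icc (0 : ℝ) 1)) :=
    measurable_subtype_coe measurableSet_Icc
  have hμT := volume_preimage_coe_Icc hc hcδ
  have hint : Integrable (fun t => g t ^ 2) (volume : Measure (Icc (0 : ℝ) 1)) :=
    (g ^ 2).continuous.integrable_of_hasCompactSupport (HasCompactSupport.of_compactSpace _)
  calc b ^ 2 * δ = b ^ 2 * (volume (Subtype.val ⁻¹' Icc c (c + δ))).toReal := by
        rw [hμT, add_sub_cancel_left, ENNReal.toReal_ofReal hδ]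
    _ ≤ ∫ t in Subtype.val ⁻¹' Icc c (c + δ), g t ^ 2 :=
        setIntegral_ge_of_const_le_real hT (by rw [hμT]; exact ENNReal.ofReal_ne_top)
          (fun t ht => by simpa only [sq_abs] using pow_le_pow_left₀ hb (hg t ht) 2)
          hint.integrableOn
    _ ≤ ∫ t, g t ^ 2 := setIntegral_le_integral hint (ae_of_all _ fun t => sq_nonneg _)
    _ = ‖toL2 g‖ ^ 2 := (norm_toL2_sq g).symm

theorem HolderBounded.norm_le_toL2 {l K : ℝ} (hl : 0 < l) {g : C(Icc (0 : ℝ) 1, ℝ)}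
    (hg : HolderBounded l K g) :
    ‖g‖ ≤ 2 * K ^ (1 / (2 * l + 1)) * ‖toL2 g‖ ^ (2 * l / (2 * l + 1)) := by
  have hK := hg.nonneg
  refine (ContinuousMap.norm_le _ (by positivity)).2 fun t₀ => ?_
  rw [Real.norm_eq_abs]
  rcases (abs_nonneg (g t₀)).eq_or_lt with ha | ha
  · rw [← ha]; positivity
  set a := |g t₀|
  have haK : a ≤ K := (ContinuousMap.norm_coe_le_norm g t₀).trans hg.1
  have hKpos : 0 < K := ha.trans_le haK
  set δ := (a / 2 / K) ^ (1 / l)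
  have hδ₀ : 0 < δ := by positivity
  have hδ₁ : δ ≤ 1 :=
    Real.rpow_le_one (by positivity) ((div_le_one hKpos).2 (by linarith)) (by positivity)
  have hKδ : K * δ ^ l = a / 2 := by
    rw [← Real.rpow_mul (by positivity), one_div_mul_cancel hl.ne', Real.rpow_one]
    field_simp
  -- `g` stays above `a / 2` on an interval of length `δ` around `t₀`
  set c := min (t₀ : ℝ) (1 - δ)
  have hc₀ : 0 ≤ c := le_min t₀.2.1 (by linarith)
  have hcδ : c + δ ≤ 1 := by linarith [min_le_right (t₀ : ℝ) (1 - δ)]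
  have hct₀ : (t₀ : ℝ) - δ ≤ c := le_min (by linarith) (by linarith [t₀.2.2])
  have hlow : ∀ t : Icc (0 : ℝ) 1, (t : ℝ) ∈ Icc c (c + δ) → a / 2 ≤ |g t| := fun t ht => by
    have htt₀ : dist t t₀ ≤ δ := by
      rw [Subtype.dist_eq, Real.dist_eq, abs_le]
      constructor <;> linarith [ht.1, ht.2, min_le_left (t₀ : ℝ) (1 - δ)]
    have hdist : dist (g t) (g t₀) ≤ a / 2 :=
      (hg.2 t t₀).trans (hKδ ▸ by gcongr)
    rw [Real.dist_eq] at hdist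
    linarith [abs_sub_abs_le_abs_sub (g t₀) (g t), abs_sub_comm (g t) (g t₀)]
  have hL := sq_mul_le_norm_toL2_sq (by positivity) hc₀ hδ₀.le hcδ hlow
  linarith [le_rpow_mul_rpow_of_sq_mul_rpow_le hl (half_pos ha) hKpos (norm_nonneg _) hL]

theorem exists_cover_of_toL2_cover {E ι : Type*} [NormedAddCommGroup E] [NormedSpace ℝ E]
    {l M ε : ℝ} (hl : 0 < l) (hM : 0 ≤ M) (hε : 0 ≤ ε) {u : E →L[ℝ] C(Icc (0 : ℝ) 1, ℝ)}
    (hu : ∀ x, HolderBounded l (M * ‖x‖) (u x))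
    (g : ι → Lp ℝ 2 (volume : Measure (Icc (0 : ℝ) 1)))
    (hg : (toL2.comp u) '' Metric.closedBall 0 1 ⊆ ⋃ i, Metric.closedBall (g i) ε) :
    ∃ f : ι → C(Icc (0 : ℝ) 1, ℝ), u '' Metric.closedBall 0 1 ⊆
      ⋃ i, Metric.closedBall (f i) (2 * M ^ (1 / (2 * l + 1)) * ε ^ (2 * l / (2 * l + 1))) := by
  have hS : ∀ φ ∈ u '' Metric.closedBall 0 1, HolderBounded l M φ := by
    rintro _ ⟨x, hx, rfl⟩
    exact (hu x).mono (mul_le_of_le_one_right hM (mem_closedBall_zero_iff.1 hx))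
  refine ContinuousMap.exists_cover_of_cover_image (HolderBounded.equicontinuous hl
    fun φ : u '' Metric.closedBall 0 1 => hS φ φ.2) toL2 ?_ g (by rw [← image_comp]; exact hg)
  rintro _ ⟨x, hx, rfl⟩ _ ⟨y, hy, rfl⟩ hxy
  have hxy₂ : ‖x - y‖ ≤ 2 := by
    linarith [norm_sub_le x y, mem_closedBall_zero_iff.1 hx, mem_closedBall_zero_iff.1 hy]
  have hL : ‖toL2 (u (x - y))‖ ≤ 2 * ε := by rwa [map_sub, map_sub, ← dist_eq_norm]
  have htwo : (2 : ℝ) ^ (1 / (2 * l + 1)) * 2 ^ (2 * l / (2 * l + 1)) = 2 := by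
    rw [← Real.rpow_add two_pos, ← add_div, add_comm, div_self (by positivity), Real.rpow_one]
  calc dist (u x) (u y) = ‖u (x - y)‖ := by rw [map_sub, dist_eq_norm]
    _ ≤ 2 * (2 * M) ^ (1 / (2 * l + 1)) * ‖toL2 (u (x - y))‖ ^ (2 * l / (2 * l + 1)) :=
        ((hu _).mono (by nlinarith)).norm_le_toL2 hl
    _ ≤ 2 * (2 * M) ^ (1 / (2 * l + 1)) * (2 * ε) ^ (2 * l / (2 * l + 1)) := by gcongr
    _ = 2 * (2 * M ^ (1 / (2 * l + 1)) * ε ^ (2 * l / (2 * l + 1))) := by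
        rw [Real.mul_rpow zero_le_two hM, Real.mul_rpow zero_le_two hε]
        linear_combination (2 * M ^ (1 / (2 * l + 1)) * ε ^ (2 * l / (2 * l + 1))) * htwo

theorem entropy_interpolation_general
    {E : Type*} [NormedAddCommGroup E] [NormedSpace ℝ E]
    (l : ℝ) (hl0 : 0 < l)
    (u : E →L[ℝ] C(Set.Icc (0 : ℝ) 1, ℝ))
    (M : ℝ) (hM0 : 0 ≤ M)
    (hM : ∀ x : E, ∀ s t : Set.Icc (0 : ℝ) 1, (s : ℝ) < t →
      |u x t - u x s| / ((t : ℝ) - s) ^ l + ‖u x‖ ≤ M * ‖x‖) :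
    ∀ k : ℕ, 1 ≤ k →
      entropyNumber u k ≤
        2 * M ^ ((1 : ℝ) / (2 * l + 1)) *
          entropyNumber (toL2.comp u) k ^ (2 * l / (2 * l + 1)) := by
  intro k _
  have hu : ∀ x, HolderBounded l (M * ‖x‖) (u x) := fun x => holderBounded_of_forall_lt (hM x)
  refine entropyNumber_le_of_covers
    (φ := fun ε => 2 * M ^ ((1 : ℝ) / (2 * l + 1)) * ε ^ (2 * l / (2 * l + 1)))
    ((Real.continuousAt_rpow_const _ _ (Or.inr (by positivity))).const_mul _)
    (mul_nonneg (by positivity) (Real.rpow_nonneg (entropyNumber_nonneg _ _) _))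
    fun ε hε g hg => exists_cover_of_toL2_cover hl0 hM0 hε.le hu g hg

/-- **Entropy interpolation via Hölder continuity.**
Let `E` be a real Banach space, `0 < λ ≤ 1`, and let `u : E → C_λ[0,1]` be a bounded operator
into the Hölder space, with `‖u : E → C_λ[0,1]‖ ≤ M` (expressed pointwise: for all `x` and all
`s < t` in `[0,1]`, `|u x (t) - u x (s)|/(t-s)^λ + ‖u x‖_∞ ≤ M ‖x‖`). Then for every `k ≥ 1`,
`e_k(u : E → C[0,1]) ≤ 2 M^{1/(2λ+1)} e_k(u : E → L₂[0,1])^{2λ/(2λ+1)}`. -/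
theorem entropy_interpolation
    {E : Type*} [NormedAddCommGroup E] [NormedSpace ℝ E] [CompleteSpace E]
    (l : ℝ) (hl0 : 0 < l) (hl1 : l ≤ 1)
    (u : E →L[ℝ] C(Set.Icc (0 : ℝ) 1, ℝ))
    (M : ℝ) (hM0 : 0 ≤ M)
    (hM : ∀ x : E, ∀ s t : Set.Icc (0 : ℝ) 1, (s : ℝ) < t →
      |u x t - u x s| / ((t : ℝ) - s) ^ l + ‖u x‖ ≤ M * ‖x‖) :
    ∀ k : ℕ, 1 ≤ k →
      entropyNumber u k ≤
        2 * M ^ ((1 : ℝ) / (2 * l + 1)) *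
          entropyNumber (toL2.comp u) k ^ (2 * l / (2 * l + 1)) :=
  entropy_interpolation_general l hl0 u M hM0 hM
end

section
/- Let E be a real Banach space, 0 < λ ≤ 1, and let u : E → C_λ[0,1] be a bounded linear operator. Then for every k ∈ ℕ and every 0 < δ ≤ 1, e_k(u : E → C[0,1]) ≤ δ^{-1/2} · e_k(u : E → L₂[0,1]) + δ^λ · ‖u : E → C_λ[0,1]‖. -/
/-!
Take an `ε`-net `g₁, …, g_N` of `u(B_E)` in `L₂` and replace each `g_j` by its moving average
`A_δ g_j (t) = δ⁻¹ ∫ g_j` over a window of length `δ` containing `t`, shifted so that it stays in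
`[0,1]`; these averages are continuous. For `f = u x` with `‖f - g_j‖₂ ≤ ε`, the difference
`f t - A_δ g_j t` is `δ⁻¹` times the sum of `∫ (f t - f s) ds` over the window, which is at most
`δ^λ M δ` by Hölder continuity, and `⟪𝟙_window, f - g_j⟫`, which is at most `δ^{1/2} ε` by
Cauchy–Schwarz. Hence the `A_δ g_j` form a `(δ^{-1/2} ε + δ^λ M)`-net of `u(B_E)` in `C[0,1]`.
-/

open MeasureTheory Filter Set

theorem entropyNumber_le_of_forall_norm_sub_le
    {E F G : Type*} [NormedAddCommGroup E] [NormedSpace ℝ E] [NormedAddCommGroup F]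
    [NormedSpace ℝ F] [NormedAddCommGroup G] [NormedSpace ℝ G]
    (u : E →L[ℝ] F) (v : E →L[ℝ] G) (Φ : G → F) {c d : ℝ} (hc : 0 < c) (hd : 0 ≤ d)
    (h : ∀ x, ‖x‖ ≤ 1 → ∀ g, ‖u x - Φ g‖ ≤ c * ‖v x - g‖ + d) (n : ℕ) :
    entropyNumber u n ≤ c * entropyNumber v n + d := by
  set S := {ε : ℝ | 0 < ε ∧ ∃ g : Fin (2 ^ (n - 1)) → G,
    v '' Metric.closedBall 0 1 ⊆ ⋃ k, Metric.closedBall (g k) ε}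
  have hS : S.Nonempty := by
    refine ⟨‖v‖ + 1, by positivity, fun _ => 0, ?_⟩
    rintro _ ⟨x, hx, rfl⟩
    rw [mem_closedBall_zero_iff] at hx
    refine mem_iUnion.2 ⟨⟨0, by positivity⟩, mem_closedBall_zero_iff.2 ?_⟩
    nlinarith [v.le_opNorm x, norm_nonneg v]
  have htransfer : ∀ ε ∈ S, entropyNumber u n ≤ c * ε + d := by
    rintro ε ⟨hε, g, hcov⟩
    refine csInf_le ⟨0, fun _ hη => hη.1.le⟩ ⟨by positivity, Φ ∘ g, ?_⟩
    rintro _ ⟨x, hx, rfl⟩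
    obtain ⟨k, hk⟩ := mem_iUnion.1 (hcov ⟨x, hx, rfl⟩)
    rw [mem_closedBall_zero_iff] at hx
    rw [Metric.mem_closedBall, dist_eq_norm] at hk
    refine mem_iUnion.2 ⟨k, ?_⟩
    rw [Metric.mem_closedBall, dist_eq_norm]
    exact (h x hx (g k)).trans (by gcongr)
  have hle : (entropyNumber u n - d) / c ≤ entropyNumber v n :=
    le_csInf hS fun ε hε => by rw [div_le_iff₀' hc]; linarith [htransfer ε hε]
  rw [div_le_iff₀' hc] at hle
  linarith

theorem abs_sub_le_mul_rpow_of_div_rpow_le {S : Set ℝ} {f : S → ℝ} {K l : ℝ} (hl : 0 < l)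
    (hf : ∀ s t : S, (s : ℝ) < t → |f t - f s| / ((t : ℝ) - s) ^ l ≤ K) (s t : S) :
    |f t - f s| ≤ K * |(t : ℝ) - s| ^ l := by
  have hlt : ∀ s t : S, (s : ℝ) < t → |f t - f s| ≤ K * |(t : ℝ) - s| ^ l := fun s t hst => by
    rw [abs_of_pos (sub_pos.2 hst)]
    exact (div_le_iff₀ (Real.rpow_pos_of_pos (sub_pos.2 hst) l)).1 (hf s t hst)
  rcases lt_trichotomy (s : ℝ) t with hst | hst | hst
  · exact hlt s t hst
  · rw [Subtype.ext hst, sub_self, abs_zero, sub_self, abs_zero, Real.zero_rpow hl.ne', mul_zero]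
  · rw [abs_sub_comm, abs_sub_comm (t : ℝ)]
    exact hlt t s hst

section ExtendByZero

variable {α E : Type*} [MeasurableSpace α] [NormedAddCommGroup E] {μ : Measure α} {s : Set α}

theorem setIntegral_extend_subtype_val [NormedSpace ℝ E] (hs : MeasurableSet s) (g : s → E)
    {I : Set α} (hI : I ⊆ s) :
    ∫ x in I, Function.extend Subtype.val g 0 x ∂μ =
      ∫ x in Subtype.val ⁻¹' I, g x ∂(μ.comap Subtype.val) := by
  rw [← Measure.restrict_restrict_of_subset hI, ← map_comap_subtype_coe hs,
    (MeasurableEmbedding.subtype_coe hs).setIntegral_map]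
  simp only [Subtype.val_injective.extend_apply]

theorem MeasureTheory.Integrable.extend_subtype_val (hs : MeasurableSet s) {g : s → E}
    (hg : Integrable g (μ.comap Subtype.val)) :
    Integrable (Function.extend Subtype.val g 0) μ := by
  have hsupp : s.indicator (Function.extend Subtype.val g 0) = Function.extend Subtype.val g 0 :=
    indicator_eq_self.2 fun x hx => by
      by_contra hxs
      exact hx (Function.extend_apply' _ _ _ fun ⟨y, hy⟩ => hxs (hy ▸ y.2))
  rw [← hsupp, integrable_indicator_iff hs, IntegrableOn, ← map_comap_subtype_coe hs,
    (MeasurableEmbedding.subtype_coe hs).integrable_map_iff]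
  rwa [show Function.extend Subtype.val g 0 ∘ Subtype.val = g from
    funext (Subtype.val_injective.extend_apply g 0)]

end ExtendByZero

theorem MeasureTheory.Integrable.continuous_intervalIntegral {X E : Type*} [TopologicalSpace X]
    [NormedAddCommGroup E] [NormedSpace ℝ E] {W : ℝ → E} (hW : Integrable W) {a b : X → ℝ}
    (ha : Continuous a) (hb : Continuous b) : Continuous fun x => ∫ s in a x..b x, W s := by
  have hsub : (fun x => ∫ s in a x..b x, W s) =
      fun x => (∫ s in 0..b x, W s) - ∫ s in 0..a x, W s := funext fun x =>
    (intervalIntegral.integral_interval_sub_left hW.intervalIntegrable hW.intervalIntegrable).symm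
  rw [hsub]
  exact ((hW.continuous_primitive 0).comp hb).sub ((hW.continuous_primitive 0).comp ha)

def windowStart (δ t : ℝ) : ℝ := min t (1 - δ)

theorem Ioc_windowStart_subset {δ t : ℝ} (hδ : δ ≤ 1) (ht : 0 ≤ t) :
    Ioc (windowStart δ t) (windowStart δ t + δ) ⊆ Icc 0 1 := fun s hs =>
  ⟨(le_min ht (by linarith)).trans hs.1.le,
    hs.2.trans (by linarith [show windowStart δ t ≤ 1 - δ from min_le_right _ _])⟩

theorem abs_sub_le_of_mem_Ioc_windowStart {δ t s : ℝ} (hδ : 0 ≤ δ) (ht : t ≤ 1)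
    (hs : s ∈ Ioc (windowStart δ t) (windowStart δ t + δ)) : |t - s| ≤ δ := by
  have hstart : windowStart δ t ≤ t := min_le_left _ _
  have hend : t ≤ windowStart δ t + δ := by
    rcases min_choice t (1 - δ) with h | h <;> simp only [windowStart, h] <;> linarith
  rw [abs_le]
  constructor <;> linarith [hs.1, hs.2]

def window (δ : ℝ) (t : Icc (0 : ℝ) 1) : Set (Icc (0 : ℝ) 1) :=
  Subtype.val ⁻¹' Ioc (windowStart δ t) (windowStart δ t + δ)

theorem measurableSet_window (δ : ℝ) (t : Icc (0 : ℝ) 1) : MeasurableSet (window δ t) :=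
  measurable_subtype_coe measurableSet_Ioc

theorem measureReal_window {δ : ℝ} (hδ0 : 0 ≤ δ) (hδ1 : δ ≤ 1) (t : Icc (0 : ℝ) 1) :
    volume.real (window δ t) = δ := by
  rw [measureReal_def, window, volume_preimage_coe measurableSet_Icc.nullMeasurableSet
    measurableSet_Ioc, inter_eq_left.2 (Ioc_windowStart_subset hδ1 t.2.1), Real.volume_Ioc,
    add_sub_cancel_left, ENNReal.toReal_ofReal hδ0]

noncomputable def localAverage (δ : ℝ) (w : Lp ℝ 2 (volume : Measure (Icc (0 : ℝ) 1))) :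
    C(Icc (0 : ℝ) 1, ℝ) where
  toFun t := δ⁻¹ * ∫ s in windowStart δ t..windowStart δ t + δ, Function.extend Subtype.val w 0 s
  continuous_toFun := by
    have ha : Continuous fun t : Icc (0 : ℝ) 1 => windowStart δ t :=
      continuous_subtype_val.min continuous_const
    exact continuous_const.mul <|
      (((Lp.memLp w).integrable one_le_two).extend_subtype_val measurableSet_Icc
        ).continuous_intervalIntegral ha (ha.add continuous_const)

theorem localAverage_eq_inner {δ : ℝ} (hδ0 : 0 ≤ δ) (hδ1 : δ ≤ 1)
    (w : Lp ℝ 2 (volume : Measure (Icc (0 : ℝ) 1))) (t : Icc (0 : ℝ) 1) :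
    localAverage δ w t = δ⁻¹ * inner ℝ (indicatorConstLp 2 (measurableSet_window δ t)
      (measure_ne_top _ _) (1 : ℝ)) w := by
  rw [L2.inner_indicatorConstLp_one]
  change _ = δ⁻¹ * ∫ x in window δ t, w x ∂(volume.comap Subtype.val)
  rw [window, ← setIntegral_extend_subtype_val measurableSet_Icc _
    (Ioc_windowStart_subset hδ1 t.2.1), ← intervalIntegral.integral_of_le (by linarith)]
  rfl

theorem abs_sub_localAverage_le {f : C(Icc (0 : ℝ) 1, ℝ)}
    {w : Lp ℝ 2 (volume : Measure (Icc (0 : ℝ) 1))} {M l δ : ℝ} (hM : 0 ≤ M) (hl : 0 ≤ l)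
    (hδ0 : 0 < δ) (hδ1 : δ ≤ 1) (hf : ∀ s t, |f t - f s| ≤ M * |(t : ℝ) - s| ^ l)
    (t : Icc (0 : ℝ) 1) :
    |f t - localAverage δ w t| ≤ δ ^ (-(1 : ℝ) / 2) * ‖toL2 f - w‖ + δ ^ l * M := by
  set χ := indicatorConstLp 2 (measurableSet_window δ t) (measure_ne_top volume _) (1 : ℝ)
  have hvol := measureReal_window hδ0.le hδ1 t
  have hχ : ‖χ‖ = δ ^ (1 / 2 : ℝ) := by
    rw [norm_indicatorConstLp two_ne_zero ENNReal.ofNat_ne_top, hvol, norm_one, one_mul]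
    norm_num
  have hf_inner : inner ℝ χ (toL2 f) = ∫ s in window δ t, f s := by
    rw [L2.inner_indicatorConstLp_one]
    refine setIntegral_congr_ae (measurableSet_window δ t) ?_
    filter_upwards [ContinuousMap.coeFn_toLp (p := 2) (μ := volume) (𝕜 := ℝ) f] with s hs _
    exact hs
  have hosc : |∫ s in window δ t, (f t - f s)| ≤ M * δ ^ l * δ := by
    calc |∫ s in window δ t, (f t - f s)| = ‖∫ s in window δ t, (f t - f s)‖ := rfl
      _ ≤ M * δ ^ l * volume.real (window δ t) :=
          norm_setIntegral_le_of_norm_le_const (measure_lt_top _ _) fun s hs => (hf s t).trans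
            (by gcongr; exact abs_sub_le_of_mem_Ioc_windowStart hδ0.le t.2.2 hs)
      _ = M * δ ^ l * δ := by rw [hvol]
  have hsplit : δ * (f t - localAverage δ w t) =
      (∫ s in window δ t, (f t - f s)) + inner ℝ χ (toL2 f - w) := by
    rw [inner_sub_right, hf_inner, localAverage_eq_inner hδ0.le hδ1,
      integral_sub (integrable_const (f t))
        (f.continuous.integrable_of_hasCompactSupport (.of_compactSpace _)).integrableOn,
      setIntegral_const, hvol]
    field_simp
    ring
  have hδhalf : δ ^ (1 / 2 : ℝ) = δ ^ (-(1 : ℝ) / 2) * δ := by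
    rw [← Real.rpow_add_one hδ0.ne']
    norm_num
  calc |f t - localAverage δ w t| = δ⁻¹ * |δ * (f t - localAverage δ w t)| := by
        rw [abs_mul, abs_of_pos hδ0]; field_simp
    _ ≤ δ⁻¹ * (M * δ ^ l * δ + δ ^ (1 / 2 : ℝ) * ‖toL2 f - w‖) := by
        rw [hsplit, ← hχ]
        gcongr
        exact (abs_add_le _ _).trans (add_le_add hosc (abs_real_inner_le_norm _ _))
    _ = δ ^ (-(1 : ℝ) / 2) * ‖toL2 f - w‖ + δ ^ l * M := by
        rw [hδhalf]
        field_simp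
        ring

theorem entropy_delta_estimate_general
    {E : Type*} [NormedAddCommGroup E] [NormedSpace ℝ E]
    (l : ℝ) (hl0 : 0 < l)
    (u : E →L[ℝ] C(Set.Icc (0 : ℝ) 1, ℝ))
    (M : ℝ) (hM0 : 0 ≤ M)
    (hM : ∀ x : E, ∀ s t : Set.Icc (0 : ℝ) 1, (s : ℝ) < t →
      |u x t - u x s| / ((t : ℝ) - s) ^ l + ‖u x‖ ≤ M * ‖x‖) :
    ∀ k : ℕ, 1 ≤ k → ∀ δ : ℝ, 0 < δ → δ ≤ 1 →
      entropyNumber u k ≤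
        δ ^ (-(1 : ℝ) / 2) * entropyNumber (toL2.comp u) k + δ ^ l * M := by
  intro k _ δ hδ0 hδ1
  refine entropyNumber_le_of_forall_norm_sub_le u (toL2.comp u) (localAverage δ)
    (Real.rpow_pos_of_pos hδ0 _) (by positivity) (fun x hx g => ?_) k
  have hHolder : ∀ s t : Icc (0 : ℝ) 1, |u x t - u x s| ≤ M * |(t : ℝ) - s| ^ l :=
    abs_sub_le_mul_rpow_of_div_rpow_le hl0 fun s t hst => by
      nlinarith [hM x s t hst, norm_nonneg (u x), mul_le_of_le_one_right hM0 hx]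
  exact (ContinuousMap.norm_le _ (by positivity)).2 fun t =>
    abs_sub_localAverage_le hM0 hl0.le hδ0 hδ1 hHolder t

/-- **Entropy estimate with the averaging parameter `δ`.**
Let `E` be a real Banach space, `0 < λ ≤ 1`, and let `u : E → C_λ[0,1]` be a bounded operator
into the Hölder space with `‖u : E → C_λ[0,1]‖ ≤ M` (expressed pointwise). Then for every
`k ≥ 1` and every `0 < δ ≤ 1`,
`e_k(u : E → C[0,1]) ≤ δ^{-1/2} e_k(u : E → L₂[0,1]) + δ^λ M`. -/
theorem entropy_delta_estimate
    {E : Type*} [NormedAddCommGroup E] [NormedSpace ℝ E] [CompleteSpace E]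
    (l : ℝ) (hl0 : 0 < l) (hl1 : l ≤ 1)
    (u : E →L[ℝ] C(Set.Icc (0 : ℝ) 1, ℝ))
    (M : ℝ) (hM0 : 0 ≤ M)
    (hM : ∀ x : E, ∀ s t : Set.Icc (0 : ℝ) 1, (s : ℝ) < t →
      |u x t - u x s| / ((t : ℝ) - s) ^ l + ‖u x‖ ≤ M * ‖x‖) :
    ∀ k : ℕ, 1 ≤ k → ∀ δ : ℝ, 0 < δ → δ ≤ 1 →
      entropyNumber u k ≤
        δ ^ (-(1 : ℝ) / 2) * entropyNumber (toL2.comp u) k + δ ^ l * M :=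
  entropy_delta_estimate_general l hl0 u M hM0 hM
end
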